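/- arXiv:1602.02205 — 3 statements merged into one kernel-verified Lean document; each statement's English description precedes it below -/
import Mathlib

section
/- With ρ_i the standard Gaussian probability of the quantization cell [i/2 - 1/4, i/2 + 1/4], the tail entropy sum over all integers i with |i| ≥ 4 satisfies ∑_{|i| ≥ 4} (-ρ_i·log ρ_i) ≤ 1.21. -/
/-!
A cell at distance `d = |i|/2 - 1/4` from the origin has length `1/2` and Gaussian density at
most `(2π)^{-1/2} e^{-d²/2} ≤ (2/5) e^{-d²/2}` on it, so `ρ_i ≤ e^{-d²/2}/5`. Together with
`-x log x ≤ (2/e) √x` this bounds the `i`-th term by `(2/√5) e^{-1 - d²/4}`. Enumerating the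
cells as `4, -4, 5, -5, …` and completing the square in `d`, the `n`-th of them is bounded by
`(2/√5) e^{-99/64} r^n` with `r = e^{-7/32}`, and the geometric series sums to about `0.97`.
-/

open MeasureTheory ProbabilityTheory Real

namespace Real

lemma negMulLog_le_exp_neg_one {x : ℝ} (hx : 0 ≤ x) : negMulLog x ≤ exp (-1) := by
  rcases hx.eq_or_lt with rfl | hx
  · simpa using (exp_pos (-1)).le
  simpa [negMulLog, exp_log hx, mul_comm] using mul_exp_neg_le_exp_neg_one (-log x)

lemma negMulLog_le_two_mul_exp_neg_one_mul_sqrt {x : ℝ} (hx : 0 ≤ x) :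
    negMulLog x ≤ 2 * exp (-1) * √x := by
  have h := negMulLog_le_exp_neg_one (sqrt_nonneg x)
  calc negMulLog x = negMulLog (√x * √x) := by rw [mul_self_sqrt hx]
    _ = 2 * √x * negMulLog √x := by rw [negMulLog_mul]; ring
    _ ≤ 2 * √x * exp (-1) := by gcongr
    _ = 2 * exp (-1) * √x := by ring

lemma exp_neg_le_inv_one_add {x : ℝ} (hx : 0 ≤ x) : exp (-x) ≤ (1 + x)⁻¹ := by
  rw [exp_neg]
  exact inv_anti₀ (by linarith) (by linarith [add_one_le_exp x])

end Real

lemma tsum_le_div_one_sub_of_le_mul_pow {α : Type*} {f : α → ℝ} {c r : ℝ} (hc : 0 ≤ c)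
    (hr₀ : 0 ≤ r) (hr₁ : r < 1) {φ : α → ℕ} (hφ : Function.Injective φ)
    (hf : ∀ a, f a ≤ c * r ^ φ a) : ∑' a, f a ≤ c / (1 - r) := by
  have hg : Summable fun n : ℕ => c * r ^ n := (summable_geometric_of_lt_one hr₀ hr₁).mul_left c
  by_cases hfs : Summable f
  · calc ∑' a, f a ≤ ∑' a, c * r ^ φ a := hfs.tsum_le_tsum hf (hg.comp_injective hφ)
      _ ≤ ∑' n, c * r ^ n := tsum_comp_le_tsum_of_inj hg (fun n => by positivity) hφ
      _ = c / (1 - r) := by rw [tsum_mul_left, tsum_geometric_of_lt_one hr₀ hr₁, div_eq_mul_inv]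
  · rw [tsum_eq_zero_of_not_summable hfs]
    exact div_nonneg hc (by linarith)

namespace ProbabilityTheory

lemma gaussianPDF_le_of_sq_le {μ : ℝ} {v : NNReal} {x d : ℝ} (h : d ^ 2 ≤ (x - μ) ^ 2) :
    gaussianPDF μ v x ≤ gaussianPDF μ v (μ + d) := by
  rw [gaussianPDF, gaussianPDF, gaussianPDFReal, gaussianPDFReal, add_sub_cancel_left]
  gcongr

lemma gaussianReal_le_volume_mul_gaussianPDF {μ : ℝ} {v : NNReal} (hv : v ≠ 0) {s : Set ℝ}
    {d : ℝ} (hd : ∀ x ∈ s, d ^ 2 ≤ (x - μ) ^ 2) :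
    gaussianReal μ v s ≤ volume s * gaussianPDF μ v (μ + d) := by
  rw [gaussianReal_apply μ hv, mul_comm, ← setLIntegral_const]
  exact setLIntegral_mono measurable_const fun x hx => gaussianPDF_le_of_sq_le (hd x hx)

lemma gaussianPDFReal_zero_one_le_two_fifths_mul_exp (x : ℝ) :
    gaussianPDFReal 0 1 x ≤ 2 / 5 * exp (-x ^ 2 / 2) := by
  have h : (5 / 2 : ℝ) ≤ √(2 * π) := by
    rw [le_sqrt (by norm_num) (by positivity)]
    linarith [pi_gt_d2]
  simp only [gaussianPDFReal, NNReal.coe_one, mul_one, sub_zero]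
  gcongr
  rw [inv_le_comm₀ (by positivity) (by norm_num)]
  linarith

lemma toReal_gaussianReal_Icc_le {c h : ℝ} (hh : 0 ≤ h) (hc : h ≤ |c|) :
    (gaussianReal 0 1 (Set.Icc (c - h) (c + h))).toReal
      ≤ 2 * h * gaussianPDFReal 0 1 (|c| - h) := by
  have hd : ∀ x ∈ Set.Icc (c - h) (c + h), (|c| - h) ^ 2 ≤ (x - 0) ^ 2 := by
    intro x hx
    have hcx : |c - x| ≤ h := abs_sub_le_iff.2 ⟨by linarith [hx.1], by linarith [hx.2]⟩
    rw [sub_zero, ← sq_abs x]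
    exact pow_le_pow_left₀ (by linarith) (by linarith [abs_sub_abs_le_abs_sub c x]) 2
  apply ENNReal.toReal_le_of_le_ofReal (mul_nonneg (by linarith) (gaussianPDFReal_nonneg 0 1 _))
  calc gaussianReal 0 1 (Set.Icc (c - h) (c + h))
      ≤ volume (Set.Icc (c - h) (c + h)) * gaussianPDF 0 1 (0 + (|c| - h)) :=
        gaussianReal_le_volume_mul_gaussianPDF one_ne_zero hd
    _ = ENNReal.ofReal (2 * h * gaussianPDFReal 0 1 (|c| - h)) := by
        rw [Real.volume_Icc, gaussianPDF, zero_add, ← ENNReal.ofReal_mul (by linarith)]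
        ring_nf

end ProbabilityTheory

def tailIndex (i : ℤ) : ℕ := 2 * (i.natAbs - 4) + if i < 0 then 1 else 0

lemma tailIndex_injective : Function.Injective fun i : {i : ℤ // 4 ≤ |i|} => tailIndex i := by
  rintro ⟨a, ha⟩ ⟨b, hb⟩ h
  rw [Int.abs_eq_natAbs] at ha hb
  simp only [tailIndex] at h
  rw [Subtype.mk.injEq]
  split_ifs at h <;> omega

lemma tailIndex_le {i : ℤ} (hi : 4 ≤ |i|) : (tailIndex i : ℝ) ≤ 2 * |(i : ℝ)| - 7 := by
  have : (tailIndex i : ℤ) ≤ 2 * |i| - 7 := by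
    rw [Int.abs_eq_natAbs] at hi ⊢
    simp only [tailIndex]
    split_ifs <;> omega
  exact_mod_cast this

lemma toReal_gaussianReal_cell_le {i : ℤ} (hi : 1 ≤ |i|) :
    (gaussianReal 0 1 (Set.Icc ((i : ℝ) / 2 - 1 / 4) ((i : ℝ) / 2 + 1 / 4))).toReal
      ≤ exp (-(|(i : ℝ)| / 2 - 1 / 4) ^ 2 / 2) / 5 := by
  have hc : |(i : ℝ) / 2| = |(i : ℝ)| / 2 := by rw [abs_div, abs_two]
  have hi' : (1 : ℝ) ≤ |(i : ℝ)| := by exact_mod_cast hi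
  calc _ ≤ 2 * (1 / 4) * gaussianPDFReal 0 1 (|(i : ℝ) / 2| - 1 / 4) :=
        toReal_gaussianReal_Icc_le (by norm_num) (by rw [hc]; linarith)
    _ ≤ 2 * (1 / 4) * (2 / 5 * exp (-(|(i : ℝ)| / 2 - 1 / 4) ^ 2 / 2)) := by
        rw [hc]; gcongr; exact gaussianPDFReal_zero_one_le_two_fifths_mul_exp _
    _ = exp (-(|(i : ℝ)| / 2 - 1 / 4) ^ 2 / 2) / 5 := by ring

lemma negMulLog_gaussianReal_cell_le {i : ℤ} (hi : 4 ≤ |i|) :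
    negMulLog (gaussianReal 0 1 (Set.Icc ((i : ℝ) / 2 - 1 / 4) ((i : ℝ) / 2 + 1 / 4))).toReal
      ≤ 2 / √5 * exp (-(99 / 64)) * exp (-(7 / 32)) ^ tailIndex i := by
  set d := |(i : ℝ)| / 2 - 1 / 4 with hd
  have hexp : -1 - d ^ 2 / 4 ≤ -(99 / 64) + tailIndex i * -(7 / 32) := by
    nlinarith [tailIndex_le hi, sq_nonneg (d - 7 / 4)]
  calc _ ≤ 2 * exp (-1) * √(exp (-d ^ 2 / 2) / 5) :=
        (negMulLog_le_two_mul_exp_neg_one_mul_sqrt ENNReal.toReal_nonneg).trans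
          (by gcongr; exact toReal_gaussianReal_cell_le (by linarith))
    _ = 2 / √5 * exp (-1 - d ^ 2 / 4) := by
        rw [sqrt_div (exp_pos _).le, ← exp_half, sub_eq_add_neg, exp_add]
        ring_nf
    _ ≤ 2 / √5 * exp (-(99 / 64) + tailIndex i * -(7 / 32)) := by gcongr
    _ = 2 / √5 * exp (-(99 / 64)) * exp (-(7 / 32)) ^ tailIndex i := by
        rw [exp_add, exp_nat_mul, mul_assoc]

lemma two_div_sqrt_five_mul_exp_div_one_sub_exp_le :
    2 / √5 * exp (-(99 / 64)) / (1 - exp (-(7 / 32))) ≤ 1.21 := by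
  have h₁ : exp (-(99 / 64)) ≤ 0.3678794412 * (1 + 35 / 64)⁻¹ := by
    rw [show -(99 / 64 : ℝ) = -1 + -(35 / 64) by norm_num, exp_add]
    gcongr
    · exact exp_neg_one_lt_d9.le
    · exact exp_neg_le_inv_one_add (by norm_num)
  have h₂ : exp (-(7 / 32)) ≤ (1 + 7 / 32)⁻¹ := exp_neg_le_inv_one_add (by norm_num)
  have h₃ : (2.236 : ℝ) ≤ √5 := by
    rw [le_sqrt (by norm_num) (by norm_num)]
    norm_num
  calc _ ≤ 2 / 2.236 * (0.3678794412 * (1 + 35 / 64)⁻¹) / (1 - (1 + 7 / 32 : ℝ)⁻¹) := by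
        gcongr
    _ ≤ 1.21 := by norm_num

/-- With `ρ_i` the standard Gaussian probability of the quantization cell
`[i/2 - 1/4, i/2 + 1/4]`, the tail entropy sum over all integers `i` with `|i| ≥ 4`
satisfies `∑_{|i| ≥ 4} (-ρ_i·log ρ_i) ≤ 1.21`. -/
theorem tsum_negMulLog_cells_tail_le :
    ∑' i : {i : ℤ // 4 ≤ |i|},
        Real.negMulLog
          (((gaussianReal 0 1)
              (Set.Icc (((i : ℤ) : ℝ) / 2 - 1 / 4) (((i : ℤ) : ℝ) / 2 + 1 / 4))).toReal)
      ≤ 1.21 :=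
  calc _ ≤ 2 / √5 * exp (-(99 / 64)) / (1 - exp (-(7 / 32))) :=
        tsum_le_div_one_sub_of_le_mul_pow (by positivity) (exp_pos _).le
          (exp_lt_one_iff.2 (by norm_num)) tailIndex_injective
          fun i => negMulLog_gaussianReal_cell_le i.2
    _ ≤ 1.21 := two_div_sqrt_five_mul_exp_div_one_sub_exp_le
end

section
/- The Shannon entropy (in bits) of the half-integer quantization of a standard Gaussian is at most 4: with ρ_i the standard Gaussian probability of the cell [i/2 - 1/4, i/2 + 1/4], one has (1/log 2)·∑_{i ∈ ℤ} (-ρ_i·log ρ_i) ≤ 4. -/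
/-!
Gibbs' inequality against the two-sided geometric distribution `q i ∝ r ^ |i|` bounds the
entropy of any distribution on `ℤ` by `log ((1 + r) / (1 - r)) - log r · E|i|`. For the
half-integer quantization `i` of a real variable `x` one has `|i| ≤ 2|x| + 1/2 ≤ x² + 3/2`, so a
second moment at most `1` gives `E|i| ≤ 5/2`, and with `r = 2/3` the bound becomes
`log 5 + (5/2) log (3/2) ≤ 4 log 2`, i.e. `5² · 3⁵ ≤ 2¹³`.
-/

open MeasureTheory ProbabilityTheory Real Set Function

theorem Real.negMulLog_le_mul_neg_log_add_sub {p q : ℝ} (hp : 0 ≤ p) (hq : 0 < q) :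
    negMulLog p ≤ p * -log q + (q - p) := by
  rcases hp.eq_or_lt with rfl | hp
  · simp [hq.le]
  · have hlog := log_le_sub_one_of_pos (div_pos hq hp)
    rw [log_div hq.ne' hp.ne'] at hlog
    have hqp : p * (q / p - 1) = q - p := by field_simp
    rw [negMulLog]
    nlinarith [mul_le_mul_of_nonneg_left hlog hp.le]

theorem Real.tsum_negMulLog_le_tsum_mul_neg_log {ι : Type*} {p q : ι → ℝ} (hp0 : ∀ i, 0 ≤ p i)
    (hp : HasSum p 1) (hq0 : ∀ i, 0 < q i) (hq : Summable q) (hq1 : ∑' i, q i ≤ 1)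
    (hpq : Summable fun i => p i * -log (q i)) :
    ∑' i, negMulLog (p i) ≤ ∑' i, p i * -log (q i) := by
  have hle i := negMulLog_le_mul_neg_log_add_sub (hp0 i) (hq0 i)
  have hnonneg i : 0 ≤ negMulLog (p i) :=
    negMulLog_nonneg (hp0 i) (le_hasSum hp i fun j _ => hp0 j)
  have hbound := hpq.add (hq.sub hp.summable)
  calc ∑' i, negMulLog (p i)
      ≤ ∑' i, (p i * -log (q i) + (q i - p i)) :=
        (Summable.of_nonneg_of_le hnonneg hle hbound).tsum_le_tsum hle hbound
    _ = ∑' i, p i * -log (q i) + (∑' i, q i - 1) := by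
        rw [hpq.tsum_add (hq.sub hp.summable), hq.tsum_sub hp.summable, hp.tsum_eq]
    _ ≤ ∑' i, p i * -log (q i) := by linarith

theorem hasSum_pow_natAbs {r : ℝ} (hr0 : 0 ≤ r) (hr1 : r < 1) :
    HasSum (fun n : ℤ => r ^ n.natAbs) ((1 + r) / (1 - r)) := by
  have hgeo := hasSum_geometric_of_lt_one hr0 hr1
  have hsplit : (1 + r) / (1 - r) = (1 - r)⁻¹ + (1 - r)⁻¹ - r ^ (0 : ℤ).natAbs := by
    field_simp [(sub_pos.2 hr1).ne']
    ring
  rw [hsplit]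
  exact HasSum.of_nat_of_neg (f := fun n : ℤ => r ^ n.natAbs) (by simpa using hgeo)
    (by simpa using hgeo)

theorem Real.tsum_negMulLog_le_of_summable_abs_mul {p : ℤ → ℝ} (hp0 : ∀ i, 0 ≤ p i)
    (hp : HasSum p 1) (hm : Summable fun i : ℤ => |(i : ℝ)| * p i) {r : ℝ} (hr0 : 0 < r)
    (hr1 : r < 1) :
    ∑' i, negMulLog (p i) ≤ log ((1 + r) / (1 - r)) - log r * ∑' i : ℤ, |(i : ℝ)| * p i := by
  set Z := (1 + r) / (1 - r)
  have hZ : 0 < Z := div_pos (by linarith) (by linarith)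
  have hq : HasSum (fun i : ℤ => r ^ i.natAbs / Z) 1 := by
    rw [← div_self hZ.ne']
    exact (hasSum_pow_natAbs hr0.le hr1).div_const Z
  have hlog (i : ℤ) : p i * -log (r ^ i.natAbs / Z) = log Z * p i - log r * (|(i : ℝ)| * p i) := by
    rw [log_div (by positivity) hZ.ne', log_pow, Nat.cast_natAbs, Int.cast_abs]
    ring
  have hpq := (hp.summable.mul_left (log Z)).sub (hm.mul_left (log r))
  calc ∑' i, negMulLog (p i)
      ≤ ∑' i, p i * -log (r ^ i.natAbs / Z) :=
        tsum_negMulLog_le_tsum_mul_neg_log hp0 hp (fun i => by positivity) hq.summable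
          hq.tsum_eq.le (by simpa only [hlog] using hpq)
    _ = log Z - log r * ∑' i : ℤ, |(i : ℝ)| * p i := by
        simp only [hlog]
        rw [(hp.summable.mul_left _).tsum_sub (hm.mul_left _), tsum_mul_left, tsum_mul_left,
          hp.tsum_eq, mul_one]

def halfIntCell (i : ℤ) : Set ℝ := Ico ((i : ℝ) / 2 - 1 / 4) (i / 2 + 1 / 4)

theorem halfIntCell_eq_Ico_add_zsmul (i : ℤ) :
    halfIntCell i = Ico (-1 / 4 + i • (1 / 2 : ℝ)) (-1 / 4 + (i + 1) • (1 / 2 : ℝ)) := by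
  simp only [halfIntCell, zsmul_eq_mul, Int.cast_add, Int.cast_one]
  congr 1 <;> ring

theorem iUnion_halfIntCell : ⋃ i, halfIntCell i = univ := by
  simpa only [halfIntCell_eq_Ico_add_zsmul] using iUnion_Ico_add_zsmul one_half_pos (-1 / 4 : ℝ)

theorem pairwise_disjoint_halfIntCell : Pairwise (Disjoint on halfIntCell) := by
  rw [funext halfIntCell_eq_Ico_add_zsmul]
  exact pairwise_disjoint_Ico_add_zsmul (-1 / 4 : ℝ) (1 / 2)

theorem abs_intCast_le_sq_add_of_mem_halfIntCell {i : ℤ} {x : ℝ} (hx : x ∈ halfIntCell i) :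
    |(i : ℝ)| ≤ x ^ 2 + 3 / 2 := by
  obtain ⟨hlo, hhi⟩ := hx
  exact abs_le.2 ⟨by nlinarith [sq_nonneg (x + 1)], by nlinarith [sq_nonneg (x - 1)]⟩

section Quantization

variable {μ : Measure ℝ}

theorem hasSum_setIntegral_halfIntCell {f : ℝ → ℝ} (hf : Integrable f μ) :
    HasSum (fun i => ∫ x in halfIntCell i, f x ∂μ) (∫ x, f x ∂μ) := by
  simpa only [iUnion_halfIntCell, Measure.restrict_univ] using
    hasSum_integral_iUnion (s := halfIntCell) (fun _ => measurableSet_Ico)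
      pairwise_disjoint_halfIntCell hf.integrableOn

theorem hasSum_measureReal_halfIntCell [IsProbabilityMeasure μ] :
    HasSum (fun i => μ.real (halfIntCell i)) 1 := by
  simpa using hasSum_setIntegral_halfIntCell (μ := μ) (integrable_const (1 : ℝ))

theorem abs_intCast_mul_measureReal_halfIntCell_le [IsFiniteMeasure μ]
    (hμ : Integrable (fun x => x ^ 2) μ) (i : ℤ) :
    |(i : ℝ)| * μ.real (halfIntCell i) ≤ ∫ x in halfIntCell i, (x ^ 2 + 3 / 2) ∂μ := by
  rw [mul_comm, ← smul_eq_mul, ← setIntegral_const]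
  exact setIntegral_mono_on (integrableOn_const (measure_ne_top _ _))
    (hμ.add (integrable_const _)).integrableOn measurableSet_Ico
    fun x hx => abs_intCast_le_sq_add_of_mem_halfIntCell hx

theorem summable_abs_intCast_mul_measureReal_halfIntCell [IsFiniteMeasure μ]
    (hμ : Integrable (fun x => x ^ 2) μ) :
    Summable fun i : ℤ => |(i : ℝ)| * μ.real (halfIntCell i) :=
  .of_nonneg_of_le (fun _ => by positivity) (abs_intCast_mul_measureReal_halfIntCell_le hμ)
    (hasSum_setIntegral_halfIntCell (hμ.add (integrable_const _))).summable

theorem tsum_abs_intCast_mul_measureReal_halfIntCell_le [IsProbabilityMeasure μ]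
    (hμ : Integrable (fun x => x ^ 2) μ) :
    ∑' i : ℤ, |(i : ℝ)| * μ.real (halfIntCell i) ≤ ∫ x, x ^ 2 ∂μ + 3 / 2 := by
  have hF : HasSum (fun i => ∫ x in halfIntCell i, (x ^ 2 + 3 / 2) ∂μ)
      (∫ x, (x ^ 2 + 3 / 2) ∂μ) :=
    hasSum_setIntegral_halfIntCell (hμ.add (integrable_const _))
  refine ((summable_abs_intCast_mul_measureReal_halfIntCell hμ).tsum_le_tsum
    (abs_intCast_mul_measureReal_halfIntCell_le hμ) hF.summable).trans_eq ?_
  rw [hF.tsum_eq, integral_add hμ (integrable_const _), integral_const, probReal_univ, one_smul]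

theorem tsum_negMulLog_measureReal_Icc_le [IsProbabilityMeasure μ] [NullSingletonClass μ]
    (hμ : Integrable (fun x => x ^ 2) μ) (hμ1 : ∫ x, x ^ 2 ∂μ ≤ 1) :
    ∑' i : ℤ, negMulLog (μ.real (Icc ((i : ℝ) / 2 - 1 / 4) (i / 2 + 1 / 4))) ≤ 4 * log 2 := by
  simp only [measureReal_congr Ico_ae_eq_Icc.symm]
  change ∑' i, negMulLog (μ.real (halfIntCell i)) ≤ _
  have hmoment := tsum_abs_intCast_mul_measureReal_halfIntCell_le hμ
  have hlog23 : log (2 / 3 : ℝ) < 0 := log_neg (by norm_num) (by norm_num)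
  have hlog : log 5 - log (2 / 3) * (5 / 2) ≤ 4 * log 2 := by
    have h := log_le_log (by norm_num) (by norm_num : (5 : ℝ) ^ 2 * 3 ^ 5 ≤ 2 ^ 13)
    rw [log_mul (by norm_num) (by norm_num), log_pow, log_pow, log_pow] at h
    rw [log_div (by norm_num) (by norm_num)]
    push_cast at h
    linarith
  calc ∑' i, negMulLog (μ.real (halfIntCell i))
      ≤ log ((1 + 2 / 3) / (1 - 2 / 3)) -
          log (2 / 3) * ∑' i : ℤ, |(i : ℝ)| * μ.real (halfIntCell i) :=
        tsum_negMulLog_le_of_summable_abs_mul (fun _ => measureReal_nonneg)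
          hasSum_measureReal_halfIntCell
          (summable_abs_intCast_mul_measureReal_halfIntCell hμ) (by norm_num) (by norm_num)
    _ ≤ log 5 - log (2 / 3) * (5 / 2) := by
        norm_num only
        exact sub_le_sub_left (mul_le_mul_of_nonpos_left (by linarith) hlog23.le) _
    _ ≤ 4 * log 2 := hlog

end Quantization

theorem integral_sq_gaussianReal_zero (v : NNReal) : ∫ x, x ^ 2 ∂gaussianReal 0 v = v := by
  rw [← variance_of_integral_eq_zero measurable_id'.aemeasurable integral_id_gaussianReal,
    variance_fun_id_gaussianReal]

/-- The Shannon entropy (in bits) of the half-integer quantization of a standard Gaussian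
is at most `4`: with `ρ_i` the standard Gaussian probability of the cell
`[i/2 - 1/4, i/2 + 1/4]`, one has `(1/log 2)·∑_{i ∈ ℤ} (-ρ_i·log ρ_i) ≤ 4`. -/
theorem gaussian_quantization_entropy_le_four :
    (1 / Real.log 2) *
        ∑' i : ℤ,
          Real.negMulLog
            (((gaussianReal 0 1)
                (Set.Icc ((i : ℝ) / 2 - 1 / 4) ((i : ℝ) / 2 + 1 / 4))).toReal) ≤ 4 := by
  have := nullSingletonClass_gaussianReal (μ := 0) one_ne_zero
  have hbound := tsum_negMulLog_measureReal_Icc_le (μ := gaussianReal 0 1)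
    (memLp_id_gaussianReal 2).integrable_sq (by simp [integral_sq_gaussianReal_zero])
  rw [one_div, inv_mul_le_iff₀ (log_pos one_lt_two), mul_comm]
  simpa only [measureReal_def] using hbound
end

section
/- (Unique state decodability without fading knowledge.) Let S and A be sets of real numbers, c a real number, and M a natural number. Suppose that for every integer i with |i| ≤ 2M, every pair s, s̃ ∈ S with s ≠ s̃, and every a, ã ∈ A, one has |i - c·a·s + c·ã·s̃| > 1/2. Then for all integers x, x̃ with |x| ≤ M and |x̃| ≤ M, all s, s̃ ∈ S, all a, ã ∈ A, and all reals z, z̃ ∈ [-1/4, 1/4], the equality x + c·a·s + z = x̃ + c·ã·s̃ + z̃ implies s = s̃. -/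
/-- Unique state decodability without fading knowledge: if every integer `i` with
`|i| ≤ 2M`, distinct states `s ≠ s'` in `S` and fading values `a, a' ∈ A` satisfy
`|i - c·a·s + c·a'·s'| > 1/2`, then from any noisy output
`x + c·a·s + z = x' + c·a'·s' + z'` with integer inputs bounded by `M` and residual
noises in `[-1/4, 1/4]`, the state is uniquely determined. -/
theorem unique_state_decoding_NCSI (S A : Set ℝ) (c : ℝ) (M : ℕ)
    (hsep : ∀ i : ℤ, |i| ≤ 2 * (M : ℤ) → ∀ s ∈ S, ∀ s' ∈ S, s ≠ s' →
      ∀ a ∈ A, ∀ a' ∈ A, |(i : ℝ) - c * a * s + c * a' * s'| > 1 / 2) :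
    ∀ x x' : ℤ, |x| ≤ (M : ℤ) → |x'| ≤ (M : ℤ) →
      ∀ s ∈ S, ∀ s' ∈ S, ∀ a ∈ A, ∀ a' ∈ A,
      ∀ z ∈ Set.Icc (-(1 / 4) : ℝ) (1 / 4), ∀ z' ∈ Set.Icc (-(1 / 4) : ℝ) (1 / 4),
      (x : ℝ) + c * a * s + z = (x' : ℝ) + c * a' * s' + z' → s = s' := by
  intro x x' hx hx' s hs s' hs' a ha a' ha' z hz z' hz' heq
  by_contra hne
  have hil : |x' - x| ≤ 2 * (M : ℤ) := by
    calc |x' - x| ≤ |x'| + |x| := abs_sub _ _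
    _ ≤ 2 * (M : ℤ) := by omega
  have h := hsep (x' - x) hil s hs s' hs' hne a ha a' ha'
  have key : ((x' - x : ℤ) : ℝ) - c * a * s + c * a' * s' = z - z' := by
    push_cast; linarith
  rw [key] at h
  rw [Set.mem_Icc] at hz hz'
  have : |z - z'| ≤ 1 / 2 := by
    rw [abs_le]; constructor <;> linarith [hz.1, hz.2, hz'.1, hz'.2]
  linarith
end
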